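/- Let M be a smooth manifold with closed 2-form ω, and let ∂(α, β) = (dα + ω ∧ β, −dβ) on Ω(M) ⊕ Ω(M). If (α₁, β₁) and (α₂, β₂) are both ∂-closed, then their product (α₁ ∧ α₂, β₁ ∧ α₂ + (−1)^{|α₁|} α₁ ∧ β₂) is ∂-closed; and if additionally (α₂, β₂) = ∂(γ, δ) is exact, then the product is ∂-exact. -/

import Mathlib

/-!
Twisting `(α, β) ↦ (εα, −εβ)` is the parity involution of the cone, and `∂` is a derivation of the
cone product with respect to it: `∂(x·y) = ∂x·y + x̃·∂y`. Hence closed times closed is closed. For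
exactness, `u = (−1)^p (α₁, β₁)` is closed with `ũ = (α₁, β₁)`, so `(α₁, β₁)·∂z = ∂(u·z)`.
-/

/-- The product on the cone complex `Ω(M) ⊕ Ω(M)`, with `ε` the parity involution
acting by `(−1)^{|α|}` on homogeneous `α`. -/
def coneMul {A : Type*} [Ring A] (ε : A →+* A) : A × A → A × A → A × A :=
  fun p q => (p.1 * q.1, p.2 * q.1 + ε p.1 * q.2)

/-- The primitive boundary map `∂(α, β) = (dα + ω ∧ β, −dβ)`. -/
def coneD {A : Type*} [Ring A] (d : A →+ A) (w : A) : A × A → A × A :=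
  fun q => (d q.1 + w * q.2, -(d q.2))

section Cone

variable {A : Type*} [Ring A]

def coneTwist (ε : A →+* A) (x : A × A) : A × A := (ε x.1, -ε x.2)

theorem coneMul_zero_left (ε : A →+* A) (y : A × A) : coneMul ε 0 y = 0 := by
  simp [coneMul]

theorem coneMul_zero_right (ε : A →+* A) (x : A × A) : coneMul ε x 0 = 0 := by
  simp [coneMul]

theorem coneD_zsmul (d : A →+ A) (w : A) (n : ℤ) (x : A × A) :
    coneD d w (n • x) = n • coneD d w x := by
  obtain ⟨a, b⟩ := x
  simp only [coneD, Prod.smul_mk, map_zsmul, mul_smul_comm, smul_add, smul_neg]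

theorem coneTwist_neg_one_pow_smul {ε : A →+* A} {p : ℕ} {α β : A}
    (hα : ε α = ((-1 : ℤ) ^ p) • α) (hβ : ε β = -(((-1 : ℤ) ^ p) • β)) :
    coneTwist ε (((-1 : ℤ) ^ p) • (α, β)) = (α, β) := by
  have hsq : ((-1 : ℤ) ^ p) * (-1) ^ p = 1 := by rw [← mul_pow]; simp
  simp only [Prod.smul_mk, coneTwist, map_zsmul, hα, hβ, smul_neg, neg_neg, smul_smul, hsq,
    one_smul]

variable {ε : A →+* A} {d : A →+ A} {w : A}
  (hLeib : ∀ x y : A, d (x * y) = d x * y + ε x * d y)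
  (hεd : ∀ x : A, ε (d x) = -(d (ε x))) (hw : ∀ x : A, w * x = x * w) (hεw : ε w = w)
include hLeib hεd hw hεw

theorem coneD_coneMul (x y : A × A) :
    coneD d w (coneMul ε x y) =
      coneMul ε (coneD d w x) y + coneMul ε (coneTwist ε x) (coneD d w y) := by
  obtain ⟨a, b⟩ := x
  obtain ⟨a', b'⟩ := y
  simp only [coneD, coneMul, coneTwist, Prod.mk_add_mk, Prod.mk.injEq, map_add, map_mul, hLeib,
    hεd, hεw]
  constructor
  · rw [mul_add w, ← mul_assoc w b, ← mul_assoc w (ε a), hw (ε a)]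
    noncomm_ring
  · rw [hw (ε b)]
    noncomm_ring

theorem coneD_coneMul_of_coneD_eq_zero {x : A × A} (hx : coneD d w x = 0) (y : A × A) :
    coneD d w (coneMul ε x y) = coneMul ε (coneTwist ε x) (coneD d w y) := by
  rw [coneD_coneMul hLeib hεd hw hεw, hx, coneMul_zero_left, zero_add]

end Cone

theorem coneD_closed_mul_closed_general {A : Type*} [Ring A] (ε : A →+* A) (d : A →+ A) (w : A)
    (hLeib : ∀ x y : A, d (x * y) = d x * y + ε x * d y)
    (hεd : ∀ x : A, ε (d x) = -(d (ε x)))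
    (hw : ∀ x : A, w * x = x * w)
    (hεw : ε w = w)
    (p : ℕ) (α₁ β₁ : A)
    (hα : ε α₁ = ((-1 : ℤ) ^ p) • α₁)
    (hβ : ε β₁ = -(((-1 : ℤ) ^ p) • β₁))
    (α₂ β₂ : A)
    (hclosed₁ : coneD d w (α₁, β₁) = 0)
    (hclosed₂ : coneD d w (α₂, β₂) = 0) :
    coneD d w (coneMul ε (α₁, β₁) (α₂, β₂)) = 0 ∧
    (∀ γ δ : A, (α₂, β₂) = coneD d w (γ, δ) →
      ∃ γ' δ' : A, coneMul ε (α₁, β₁) (α₂, β₂) = coneD d w (γ', δ')) := by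
  refine ⟨?_, fun γ δ hγδ => ?_⟩
  · rw [coneD_coneMul_of_coneD_eq_zero hLeib hεd hw hεw hclosed₁, hclosed₂, coneMul_zero_right]
  have hu : coneD d w (((-1 : ℤ) ^ p) • (α₁, β₁)) = 0 := by
    rw [coneD_zsmul, hclosed₁, smul_zero]
  have key := coneD_coneMul_of_coneD_eq_zero hLeib hεd hw hεw hu (γ, δ)
  rw [coneTwist_neg_one_pow_smul hα hβ, ← hγδ] at key
  exact ⟨_, _, key.symm⟩

theorem coneD_closed_mul_closed {A : Type*} [Ring A] (ε : A →+* A) (d : A →+ A) (w : A)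
    (hd2 : ∀ x : A, d (d x) = 0)
    (hLeib : ∀ x y : A, d (x * y) = d x * y + ε x * d y)
    (hεd : ∀ x : A, ε (d x) = -(d (ε x)))
    (hw : ∀ x : A, w * x = x * w)
    (hεw : ε w = w)
    (hdw : d w = 0)
    (p : ℕ) (α₁ β₁ : A)
    (hα : ε α₁ = ((-1 : ℤ) ^ p) • α₁)
    (hβ : ε β₁ = -(((-1 : ℤ) ^ p) • β₁))
    (α₂ β₂ : A)
    (hclosed₁ : coneD d w (α₁, β₁) = 0)
    (hclosed₂ : coneD d w (α₂, β₂) = 0) :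
    coneD d w (coneMul ε (α₁, β₁) (α₂, β₂)) = 0 ∧
    (∀ γ δ : A, (α₂, β₂) = coneD d w (γ, δ) →
      ∃ γ' δ' : A, coneMul ε (α₁, β₁) (α₂, β₂) = coneD d w (γ', δ')) :=
  coneD_closed_mul_closed_general ε d w hLeib hεd hw hεw p α₁ β₁ hα hβ α₂ β₂ hclosed₁ hclosed₂
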